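/- arXiv:1011.4785 — 6 statements merged into one kernel-verified Lean document; each statement's English description precedes it below -/
import Mathlib

section
/- Let (Ω, Σ, μ) be an atomless measure space, and let f_1, ..., f_n be integrable simple functions on Ω. Then for every λ ∈ [0,1] there exists a measurable partition Ω = A ⊔ B such that ∫_A f_j dμ = λ ∫_Ω f_j dμ and ∫_B f_j dμ = (1-λ) ∫_Ω f_j dμ for every j = 1, ..., n. -/
/-!
Let `F = (f_1, …, f_n)`, a simple function with values in `ℝⁿ`. Its fibres `F⁻¹{v}` partition `Ω`
into finitely many measurable pieces, of finite measure for `v ≠ 0` by integrability. By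
Sierpiński's theorem an atomless measure takes every value between `0` and `μ S` on subsets of
`S`, so each such fibre contains a measurable `T_v` with `μ T_v = λ μ (F⁻¹{v})`; let `A` be the
union of the `T_v`. Every level set `f_j⁻¹{c}`, `c ≠ 0`, is a union of such fibres, so `A` cuts it
in proportion `λ`, and `∫_A f_j = λ ∫ f_j` because the integral of a simple function is a
weighted sum of the measures of its level sets. The integral over `Aᶜ` is the rest.
-/

open MeasureTheory
open scoped ENNReal

def MeasureAtomless {Ω : Type*} [MeasurableSpace Ω] (μ : Measure Ω) : Prop :=
  ∀ A : Set Ω, MeasurableSet A → 0 < μ A →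
    ∃ B ⊆ A, MeasurableSet B ∧ 0 < μ B ∧ μ B < μ A

theorem ENNReal.exists_le_add_of_biSup_ne_top {ι : Type*} {m : ι → ℝ≥0∞} {p : ι → Prop}
    (hp : ∃ i, p i) (hsup : ⨆ (i) (_ : p i), m i ≠ ∞) {ε : ℝ≥0∞} (hε : ε ≠ 0) :
    ∃ i, p i ∧ ∀ j, p j → m j ≤ m i + ε := by
  set s := ⨆ (i) (_ : p i), m i
  have hle : ∀ j, p j → m j ≤ s := fun j hj => le_iSup₂ (f := fun i (_ : p i) => m i) j hj
  rcases eq_or_ne s 0 with hs | hs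
  · obtain ⟨i, hi⟩ := hp
    exact ⟨i, hi, fun j hj => (hle j hj).trans (hs ▸ zero_le)⟩
  · obtain ⟨i, hi, hlt⟩ : ∃ i, p i ∧ s - ε < m i := by
      have h := ENNReal.sub_lt_self hsup hs hε
      simp only [s, lt_iSup_iff, exists_prop] at h
      exact h
    refine ⟨i, hi, fun j hj => ?_⟩
    calc m j ≤ s := hle j hj
      _ ≤ s - ε + ε := le_tsub_add
      _ ≤ m i + ε := by gcongr

theorem MeasureTheory.exists_subset_measure_le_maximal {Ω : Type*} [MeasurableSpace Ω]
    {μ : Measure Ω} {S : Set Ω} {c : ℝ≥0∞} (hc : c ≠ ∞) :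
    ∃ W ⊆ S, MeasurableSet W ∧ μ W ≤ c ∧
      ∀ X ⊆ S \ W, MeasurableSet X → μ W + μ X ≤ c → μ X = 0 := by
  let Adm : Set Ω → Prop := fun T => T ⊆ S ∧ MeasurableSet T ∧ μ T ≤ c
  have step : ∀ (k : ℕ) (T : Set Ω), Adm T →
      ∃ U, (Adm U ∧ T ⊆ U) ∧ ∀ V, Adm V ∧ T ⊆ V → μ V ≤ μ U + (k : ℝ≥0∞)⁻¹ := by
    refine fun k T hT => ENNReal.exists_le_add_of_biSup_ne_top ⟨T, hT, subset_rfl⟩ ?_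
      (ENNReal.inv_ne_zero.2 (ENNReal.natCast_ne_top k))
    exact ne_top_of_le_ne_top hc (iSup₂_le fun U hU => hU.1.2.2)
  choose! next hnext_adm hnext_max using step
  let seq : ℕ → Set Ω := fun k => Nat.rec ∅ next k
  have hseq_adm : ∀ k, Adm (seq k) := by
    intro k
    induction k with
    | zero => exact ⟨Set.empty_subset S, .empty, by simp [seq]⟩
    | succ k ih => exact (hnext_adm k _ ih).1
  have hseq_mono : Monotone seq :=
    monotone_nat_of_le_succ fun k => (hnext_adm k _ (hseq_adm k)).2
  set W := ⋃ k, seq k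
  have hWS : W ⊆ S := Set.iUnion_subset fun k => (hseq_adm k).1
  have hW : MeasurableSet W := .iUnion fun k => (hseq_adm k).2.1
  have hWc : μ W ≤ c := by
    rw [hseq_mono.measure_iUnion]
    exact iSup_le fun k => (hseq_adm k).2.2
  refine ⟨W, hWS, hW, hWc, fun X hXS hX hWXc => ?_⟩
  have hWX : μ (W ∪ X) = μ W + μ X :=
    measure_union (Set.disjoint_sdiff_right.mono_right hXS) hX
  have hWX_adm : Adm (W ∪ X) :=
    ⟨Set.union_subset hWS (hXS.trans Set.sdiff_subset), hW.union hX, hWX ▸ hWXc⟩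
  -- `W ∪ X` competes with every greedy step, so `μ X` is below every `k⁻¹`
  have hX_le : ∀ k : ℕ, μ X ≤ (k : ℝ≥0∞)⁻¹ := fun k => by
    refine (ENNReal.add_le_add_iff_left (ne_top_of_le_ne_top hc hWc)).1 ?_
    calc μ W + μ X = μ (W ∪ X) := hWX.symm
      _ ≤ μ (seq (k + 1)) + (k : ℝ≥0∞)⁻¹ :=
        hnext_max k _ (hseq_adm k) _
          ⟨hWX_adm, (Set.subset_iUnion seq k).trans Set.subset_union_left⟩
      _ ≤ μ W + (k : ℝ≥0∞)⁻¹ := by gcongr; exact Set.subset_iUnion seq (k + 1)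
  by_contra hX₀
  obtain ⟨k, hk⟩ := ENNReal.exists_inv_nat_lt hX₀
  exact (hX_le k).not_gt hk

namespace MeasureAtomless

variable {Ω : Type*} [MeasurableSpace Ω] {μ : Measure Ω} {S : Set Ω}

theorem exists_subset_measure_pos_le_half (hμ : MeasureAtomless μ) (hS : MeasurableSet S)
    (hS₀ : 0 < μ S) :
    ∃ T ⊆ S, MeasurableSet T ∧ 0 < μ T ∧ μ T ≤ 2⁻¹ * μ S := by
  obtain ⟨B, hBS, hB, hB₀, hBS_lt⟩ := hμ S hS hS₀
  rw [← ENNReal.div_eq_inv_mul]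
  rcases le_or_gt (μ B) (μ S / 2) with hle | hgt
  · exact ⟨B, hBS, hB, hB₀, hle⟩
  · have hdiff : μ (S \ B) = μ S - μ B := measure_sdiff hBS hB.nullMeasurableSet hBS_lt.ne_top
    refine ⟨S \ B, Set.sdiff_subset, hS.diff hB, hdiff ▸ tsub_pos_of_lt hBS_lt, ?_⟩
    rw [hdiff, tsub_le_iff_right]
    calc μ S = μ S / 2 + μ S / 2 := (ENNReal.add_halves _).symm
      _ ≤ μ S / 2 + μ B := by gcongr

theorem exists_subset_measure_pos_le (hμ : MeasureAtomless μ) (hS : MeasurableSet S)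
    (hS₀ : 0 < μ S) (hS_top : μ S ≠ ∞) {ε : ℝ≥0∞} (hε : ε ≠ 0) :
    ∃ T ⊆ S, MeasurableSet T ∧ 0 < μ T ∧ μ T ≤ ε := by
  have halving : ∀ k : ℕ, ∃ T ⊆ S, MeasurableSet T ∧ 0 < μ T ∧ μ T ≤ 2⁻¹ ^ k * μ S := by
    intro k
    induction k with
    | zero => exact ⟨S, subset_rfl, hS, hS₀, by simp⟩
    | succ k ih =>
      obtain ⟨T, hTS, hT, hT₀, hT_le⟩ := ih
      obtain ⟨U, hUT, hU, hU₀, hU_le⟩ := hμ.exists_subset_measure_pos_le_half hT hT₀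
      refine ⟨U, hUT.trans hTS, hU, hU₀, hU_le.trans ?_⟩
      rw [pow_succ', mul_assoc]
      gcongr
  obtain ⟨k, hk⟩ := ENNReal.exists_inv_two_pow_lt (ENNReal.div_pos hε hS_top).ne'
  obtain ⟨T, hTS, hT, hT₀, hT_le⟩ := halving k
  exact ⟨T, hTS, hT, hT₀, hT_le.trans (ENNReal.mul_le_of_le_div hk.le)⟩


theorem exists_subset_measure_eq (hμ : MeasureAtomless μ) (hS : MeasurableSet S)
    (hS_top : μ S ≠ ∞) {c : ℝ≥0∞} (hc : c ≤ μ S) :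
    ∃ T ⊆ S, MeasurableSet T ∧ μ T = c := by
  obtain ⟨W, hWS, hW, hWc, hW_max⟩ :=
    exists_subset_measure_le_maximal (μ := μ) (S := S) (ne_top_of_le_ne_top hS_top hc)
  refine ⟨W, hWS, hW, hWc.antisymm (not_lt.1 fun hlt => ?_)⟩
  obtain ⟨X, hXS, hX, hX₀, hXc⟩ := hμ.exists_subset_measure_pos_le (hS.diff hW)
    (by
      rw [measure_sdiff hWS hW.nullMeasurableSet hlt.ne_top]
      exact tsub_pos_of_lt (hlt.trans_le hc))
    (ne_top_of_le_ne_top hS_top (measure_mono Set.sdiff_subset)) (tsub_pos_of_lt hlt).ne'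
  refine hX₀.ne' (hW_max X hXS hX ?_)
  calc μ W + μ X ≤ μ W + (c - μ W) := by gcongr
    _ = c := add_tsub_cancel_of_le hlt.le

theorem exists_restrict_preimage_eq_mul {E : Type*} (hμ : MeasureAtomless μ)
    (F : SimpleFunc Ω E) {a : ℝ≥0∞} (ha : a ≤ 1) :
    ∃ A, MeasurableSet A ∧
      ∀ v, μ (F ⁻¹' {v}) ≠ ∞ → μ.restrict A (F ⁻¹' {v}) = a * μ (F ⁻¹' {v}) := by
  have hfiber : ∀ v, ∃ T ⊆ F ⁻¹' {v}, MeasurableSet T ∧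
      (μ (F ⁻¹' {v}) ≠ ∞ → μ T = a * μ (F ⁻¹' {v})) := by
    intro v
    by_cases hv : μ (F ⁻¹' {v}) = ∞
    · exact ⟨∅, Set.empty_subset _, .empty, absurd hv⟩
    · obtain ⟨T, hT⟩ := hμ.exists_subset_measure_eq (F.measurableSet_fiber v) hv
        (mul_le_of_le_one_left zero_le ha)
      exact ⟨T, hT.1, hT.2.1, fun _ => hT.2.2⟩
  choose T hT_sub hT hT_meas using hfiber
  -- `{ω | ω ∈ T (F ω)} = ⋃ v, T v`, in a form whose measurability is `measurableSet_cut`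
  refine ⟨{ω | ω ∈ T (F ω)}, F.measurableSet_cut (fun ω v => ω ∈ T v) hT, fun v hv => ?_⟩
  have hinter : F ⁻¹' {v} ∩ {ω | ω ∈ T (F ω)} = T v := by
    ext ω
    constructor
    · rintro ⟨rfl, hω⟩
      exact hω
    · intro hω
      have hFω : F ω = v := hT_sub v hω
      exact ⟨hFω, show ω ∈ T (F ω) by rw [hFω]; exact hω⟩
  rw [Measure.restrict_apply (F.measurableSet_fiber v), hinter, hT_meas v hv]

end MeasureAtomless

namespace MeasureTheory.SimpleFunc

variable {Ω : Type*} [MeasurableSpace Ω] {μ : Measure Ω}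

def pi {ι β : Type*} [Finite ι] (f : ι → SimpleFunc Ω β) : SimpleFunc Ω (ι → β) where
  toFun ω i := f i ω
  measurableSet_fiber' v := by
    convert MeasurableSet.iInter fun i => (f i).measurableSet_fiber (v i)
    ext ω
    simp [funext_iff]
  finite_range' := (Set.Finite.pi fun i => (f i).finite_range).subset (by
    rintro _ ⟨ω, rfl⟩
    simp)

@[simp]
theorem map_pi_eval {ι β : Type*} [Finite ι] (f : ι → SimpleFunc Ω β) (i : ι) :
    (pi f).map (fun v => v i) = f i :=
  rfl

theorem measure_preimage_pi_ne_top {ι E : Type*} [Finite ι] [NormedAddCommGroup E]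
    {f : ι → SimpleFunc Ω E} (hf : ∀ i, Integrable (f i) μ) {v : ι → E} (hv : v ≠ 0) :
    μ (pi f ⁻¹' {v}) ≠ ∞ := by
  obtain ⟨i, hi⟩ := Function.ne_iff.1 hv
  refine ne_top_of_le_ne_top ((f i).measure_preimage_lt_top_of_integrable (hf i) hi).ne
    (measure_mono fun ω hω => ?_)
  simp only [Set.mem_preimage, Set.mem_singleton_iff] at hω ⊢
  exact congrFun hω i

theorem restrict_preimage_map_eq_mul {E G : Type*} [Zero E] [Zero G] {F : SimpleFunc Ω E}
    {g : E → G} (hg : g 0 = 0) {B : Set Ω} {a : ℝ≥0∞}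
    (hF : ∀ v ≠ 0, μ.restrict B (F ⁻¹' {v}) = a * μ (F ⁻¹' {v})) :
    ∀ c ≠ 0, μ.restrict B (F.map g ⁻¹' {c}) = a * μ (F.map g ⁻¹' {c}) := by
  classical
  intro c hc
  rw [map_preimage_singleton, ← F.sum_measure_preimage_singleton,
    ← F.sum_measure_preimage_singleton, Finset.mul_sum]
  refine Finset.sum_congr rfl fun v hv => hF v ?_
  rintro rfl
  exact hc ((Finset.mem_filter.1 hv).2 ▸ hg)

theorem setIntegral_eq_toReal_smul {E : Type*} [NormedAddCommGroup E] [NormedSpace ℝ E]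
    [CompleteSpace E] (g : SimpleFunc Ω E) (hg : Integrable g μ) {B : Set Ω} {a : ℝ≥0∞}
    (h : ∀ c ≠ 0, μ.restrict B (g ⁻¹' {c}) = a * μ (g ⁻¹' {c})) :
    ∫ ω in B, g ω ∂μ = a.toReal • ∫ ω, g ω ∂μ := by
  rw [g.integral_eq_sum hg.restrict, g.integral_eq_sum hg, Finset.smul_sum]
  refine Finset.sum_congr rfl fun c _ => ?_
  rcases eq_or_ne c 0 with rfl | hc
  · simp
  · rw [measureReal_def, measureReal_def, h c hc, ENNReal.toReal_mul, mul_smul]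

end MeasureTheory.SimpleFunc

/-- Let `(Ω, Σ, μ)` be an atomless measure space and `f_1, …, f_n` integrable simple
functions. Then for every `λ ∈ [0,1]` there is a measurable partition `Ω = A ⊔ B`
(`B = Aᶜ`) with `∫_A f_j = λ ∫ f_j` and `∫_B f_j = (1-λ) ∫ f_j` for all `j`. -/
theorem stmt5 {Ω : Type*} [MeasurableSpace Ω] (μ : Measure Ω)
    (hμ : MeasureAtomless μ) (n : ℕ) (f : Fin n → SimpleFunc Ω ℝ)
    (hf : ∀ j, Integrable (f j) μ) (lam : ℝ) (hlam : lam ∈ Set.Icc (0 : ℝ) 1) :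
    ∃ A : Set Ω, MeasurableSet A ∧
      (∀ j, ∫ ω in A, f j ω ∂μ = lam * ∫ ω, f j ω ∂μ) ∧
      (∀ j, ∫ ω in Aᶜ, f j ω ∂μ = (1 - lam) * ∫ ω, f j ω ∂μ) := by
  obtain ⟨hlam₀, hlam₁⟩ := hlam
  obtain ⟨A, hA, hA_fiber⟩ := hμ.exists_restrict_preimage_eq_mul (SimpleFunc.pi f)
    (ENNReal.ofReal_le_one.2 hlam₁)
  have hA_int : ∀ j, ∫ ω in A, f j ω ∂μ = lam * ∫ ω, f j ω ∂μ := fun j => by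
    have hfj := hf j
    rw [← SimpleFunc.map_pi_eval f j] at hfj ⊢
    rw [SimpleFunc.setIntegral_eq_toReal_smul _ hfj (SimpleFunc.restrict_preimage_map_eq_mul rfl
      fun v hv => hA_fiber v (SimpleFunc.measure_preimage_pi_ne_top hf hv)),
      ENNReal.toReal_ofReal hlam₀, smul_eq_mul]
  refine ⟨A, hA, hA_int, fun j => ?_⟩
  linarith [integral_add_compl hA (hf j), hA_int j]
end

section
/- Let (Ω, Σ, μ) be a measure space, 1 < p < ∞, q = p/(p-1), and let A, B ∈ Σ be disjoint with 0 < μ(A), μ(B) < ∞. Define T₀ on L_p(μ) by T₀x = μ(A)^(-1/q) μ(B)^(-1/p) (∫_A x dμ) · 1_B. Then for every x ∈ L_p(μ) with ‖x‖_p = 1, one has ∫_Ω |x|^(p-1) |T₀x| dμ ≤ p^(-1/p) q^(-1/q). -/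
/-!
Write `s = ∫_A |x|^p` and `t = ∫_B |x|^p`, so `s + t ≤ ‖x‖_p^p = 1` by disjointness. Hölder's
inequality against `1_A` gives `|∫_A x| ≤ s^(1/p) μ(A)^(1/q)`, and against `1_B` with the exponents
swapped gives `∫_B |x|^(p-1) ≤ t^(1/q) μ(B)^(1/p)`. The normalising factors of `T₀` cancel the
measures, leaving `s^(1/p) t^(1/q)`, and weighted AM-GM applied to `p s` and `q t` bounds this by
`p^(-1/p) q^(-1/q) (s + t)`.
-/

open MeasureTheory
open scoped ENNReal

theorem Real.rpow_one_div_mul_rpow_one_div_le_of_add_le_one {p q s t : ℝ}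
    (hpq : p.HolderConjugate q) (hs : 0 ≤ s) (ht : 0 ≤ t) (hst : s + t ≤ 1) :
    s ^ (1 / p) * t ^ (1 / q) ≤ p ^ (-(1 / p)) * q ^ (-(1 / q)) := by
  have hp := hpq.pos
  have hq := hpq.symm.pos
  calc s ^ (1 / p) * t ^ (1 / q)
      = p ^ (-(1 / p)) * q ^ (-(1 / q)) * ((p * s) ^ (1 / p) * (q * t) ^ (1 / q)) := by
        rw [Real.mul_rpow hp.le hs, Real.mul_rpow hq.le ht, Real.rpow_neg hp.le,
          Real.rpow_neg hq.le]
        field_simp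
    _ ≤ p ^ (-(1 / p)) * q ^ (-(1 / q)) * (1 / p * (p * s) + 1 / q * (q * t)) := by
        gcongr
        exact Real.geom_mean_le_arith_mean2_weighted (by positivity) (by positivity)
          (by positivity) (by positivity) (by simpa [one_div] using hpq.inv_add_inv_eq_one)
    _ = p ^ (-(1 / p)) * q ^ (-(1 / q)) * (s + t) := by field_simp
    _ ≤ p ^ (-(1 / p)) * q ^ (-(1 / q)) := mul_le_of_le_one_right (by positivity) hst

section
variable {α E : Type*} [MeasurableSpace α] {μ : Measure α} {s : Set α}

theorem setIntegral_le_setIntegral_rpow_mul_measureReal {p q : ℝ} (hpq : p.HolderConjugate q)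
    {f : α → ℝ} (hf_nonneg : 0 ≤ᵐ[μ.restrict s] f) (hf : MemLp f (ENNReal.ofReal p) (μ.restrict s))
    (hs : μ s ≠ ∞) :
    ∫ x in s, f x ∂μ ≤ (∫ x in s, f x ^ p ∂μ) ^ (1 / p) * μ.real s ^ (1 / q) := by
  have : Fact (μ s < ∞) := ⟨hs.lt_top⟩
  simpa [hpq.symm.pos.ne'] using integral_mul_le_Lp_mul_Lq_of_nonneg hpq hf_nonneg
    (.of_forall fun _ => zero_le_one) hf (memLp_const (1 : ℝ))

variable [NormedAddCommGroup E]

theorem norm_setIntegral_le_of_memLp [NormedSpace ℝ E] {p q : ℝ} (hpq : p.HolderConjugate q)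
    {f : α → E} (hf : MemLp f (ENNReal.ofReal p) μ) (hs : μ s ≠ ∞) :
    ‖∫ x in s, f x ∂μ‖ ≤ (∫ x in s, ‖f x‖ ^ p ∂μ) ^ (1 / p) * μ.real s ^ (1 / q) :=
  (norm_integral_le_integral_norm f).trans <|
    setIntegral_le_setIntegral_rpow_mul_measureReal hpq (.of_forall fun _ => norm_nonneg _)
      (hf.norm.restrict s) hs

theorem setIntegral_norm_rpow_sub_one_le {p q : ℝ} (hpq : p.HolderConjugate q) {f : α → E}
    (hf : MemLp f (ENNReal.ofReal p) μ) (hs : μ s ≠ ∞) :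
    ∫ x in s, ‖f x‖ ^ (p - 1) ∂μ ≤ (∫ x in s, ‖f x‖ ^ p ∂μ) ^ (1 / q) * μ.real s ^ (1 / p) := by
  have hmem : MemLp (fun x => ‖f x‖ ^ (p - 1)) (ENNReal.ofReal q) μ := by
    have := hf.norm_rpow_div (ENNReal.ofReal (p - 1))
    rwa [ENNReal.toReal_ofReal hpq.sub_one_pos.le, ← ENNReal.ofReal_div_of_pos hpq.sub_one_pos,
      ← hpq.conjugate_eq] at this
  have hpow : ∀ x, (‖f x‖ ^ (p - 1)) ^ q = ‖f x‖ ^ p := fun x => by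
    rw [← Real.rpow_mul (norm_nonneg _), hpq.sub_one_mul_conj]
  simpa only [hpow] using setIntegral_le_setIntegral_rpow_mul_measureReal hpq.symm
    (.of_forall fun x => Real.rpow_nonneg (norm_nonneg _) _) (hmem.restrict s) hs

theorem Lp.integral_norm_rpow_eq_norm_rpow {p : ℝ} (hp : 0 < p) (f : Lp E (ENNReal.ofReal p) μ) :
    ∫ x, ‖f x‖ ^ p ∂μ = ‖f‖ ^ p := by
  rw [Lp.norm_def, toReal_eLpNorm (Lp.aestronglyMeasurable f),
    lpNorm_eq_integral_norm_rpow_toReal (by simpa using hp) ENNReal.ofReal_ne_top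
      (Lp.aestronglyMeasurable f), ENNReal.toReal_ofReal hp.le,
    ← Real.rpow_mul (integral_nonneg fun _ => by positivity), inv_mul_cancel₀ hp.ne',
    Real.rpow_one]

theorem integral_mul_mul_indicator_one {B : Set α} (hB : MeasurableSet B) (f : α → ℝ) (c : ℝ) :
    ∫ x, f x * (c * B.indicator (fun _ => (1 : ℝ)) x) ∂μ = c * ∫ x in B, f x ∂μ := by
  have hpointwise : ∀ x,
      f x * (c * B.indicator (fun _ => (1 : ℝ)) x) = B.indicator (fun x => c * f x) x :=
    fun x => by by_cases hx : x ∈ B <;> simp [hx, mul_comm]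
  simp_rw [hpointwise, integral_indicator hB, integral_const_mul]
end

theorem stmt8_general {Ω : Type*} [MeasurableSpace Ω] (μ : Measure Ω)
    {𝕜 : Type*} [RCLike 𝕜]
    (p q : ℝ) (hp : 1 < p) (hq : q = p / (p - 1))
    [Fact (1 ≤ ENNReal.ofReal p)]
    (A B : Set Ω) (hB : MeasurableSet B)
    (hAB : Disjoint A B) (hA0 : 0 < μ A) (hAfin : μ A < ⊤)
    (hB0 : 0 < μ B) (hBfin : μ B < ⊤)
    (x : Lp 𝕜 (ENNReal.ofReal p) μ) (hx : ‖x‖ = 1) :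
    ∫ ω, ‖x ω‖ ^ (p - 1) *
        ((μ A).toReal ^ (-(1 / q)) * (μ B).toReal ^ (-(1 / p)) *
          ‖∫ ω' in A, x ω' ∂μ‖ * B.indicator (fun _ => (1 : ℝ)) ω) ∂μ ≤
      p ^ (-(1 / p)) * q ^ (-(1 / q)) := by
  have hpq : p.HolderConjugate q := (Real.holderConjugate_iff_eq_conjExponent hp).2 hq
  set s := ∫ ω in A, ‖x ω‖ ^ p ∂μ
  set t := ∫ ω in B, ‖x ω‖ ^ p ∂μ
  have hst : s + t ≤ 1 := by
    have hint : Integrable (fun ω => ‖x ω‖ ^ p) μ := by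
      simpa [hpq.nonneg] using (Lp.memLp x).integrable_norm_rpow (by simpa using hpq.pos)
        ENNReal.ofReal_ne_top
    rw [← setIntegral_union hAB hB hint.integrableOn hint.integrableOn, ← Real.one_rpow p, ← hx,
      ← Lp.integral_norm_rpow_eq_norm_rpow hpq.pos]
    exact setIntegral_le_integral hint (.of_forall fun _ => by positivity)
  have ha : 0 < (μ A).toReal := ENNReal.toReal_pos hA0.ne' hAfin.ne
  have hb : 0 < (μ B).toReal := ENNReal.toReal_pos hB0.ne' hBfin.ne
  rw [integral_mul_mul_indicator_one hB]
  calc _ ≤ (μ A).toReal ^ (-(1 / q)) * (μ B).toReal ^ (-(1 / p)) *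
          (s ^ (1 / p) * μ.real A ^ (1 / q)) * (t ^ (1 / q) * μ.real B ^ (1 / p)) := by
        gcongr
        · exact norm_setIntegral_le_of_memLp hpq (Lp.memLp x) hAfin.ne
        · exact setIntegral_norm_rpow_sub_one_le hpq (Lp.memLp x) hBfin.ne
    _ = s ^ (1 / p) * t ^ (1 / q) := by
        rw [measureReal_def, measureReal_def, Real.rpow_neg ha.le, Real.rpow_neg hb.le]
        field_simp
    _ ≤ p ^ (-(1 / p)) * q ^ (-(1 / q)) :=
        Real.rpow_one_div_mul_rpow_one_div_le_of_add_le_one hpq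
          (integral_nonneg fun _ => by positivity) (integral_nonneg fun _ => by positivity) hst

/-- For the operator `T₀ x = μ(A)^(-1/q) μ(B)^(-1/p) (∫_A x dμ) 1_B` on `L_p(μ)` and
every norm-one `x`, one has `∫ |x|^(p-1) |T₀ x| dμ ≤ p^(-1/p) q^(-1/q)`. -/
theorem stmt8 {Ω : Type*} [MeasurableSpace Ω] (μ : Measure Ω)
    {𝕜 : Type*} [RCLike 𝕜]
    (p q : ℝ) (hp : 1 < p) (hq : q = p / (p - 1))
    [Fact (1 ≤ ENNReal.ofReal p)]
    (A B : Set Ω) (hA : MeasurableSet A) (hB : MeasurableSet B)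
    (hAB : Disjoint A B) (hA0 : 0 < μ A) (hAfin : μ A < ⊤)
    (hB0 : 0 < μ B) (hBfin : μ B < ⊤)
    (x : Lp 𝕜 (ENNReal.ofReal p) μ) (hx : ‖x‖ = 1) :
    ∫ ω, ‖x ω‖ ^ (p - 1) *
        ((μ A).toReal ^ (-(1 / q)) * (μ B).toReal ^ (-(1 / p)) *
          ‖∫ ω' in A, x ω' ∂μ‖ * B.indicator (fun _ => (1 : ℝ)) ω) ∂μ ≤
      p ^ (-(1 / p)) * q ^ (-(1 / q)) :=
  stmt8_general μ p q hp hq A B hB hAB hA0 hAfin hB0 hBfin x hx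
end

section
/- Let H be a real Hilbert space of dimension at least 2. Then the infimum of v(T) over all rank-one operators T on H with ‖T‖ = 1 equals 1/2, where v(T) = sup{ |⟨Tx, x⟩| : ‖x‖ = 1 }. -/
/-!
For unit vectors `x₁, x₂` with `c = ⟪x₁, x₂⟫ ≥ 0` (replace `x₂` by `-x₂` otherwise), testing at
the unit vector along `x₁ + x₂` gives `v(T) ≥ (1 + c)² / (2 + 2c) = (1 + c) / 2 ≥ 1 / 2`.
If `x₁ ⟂ x₂`, Bessel's inequality `⟪x, x₁⟫² + ⟪x, x₂⟫² ≤ 1` and AM-GM give `v(T) ≤ 1 / 2`,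
and orthonormal pairs exist as soon as `dim H ≥ 2`.
-/

open scoped RealInnerProductSpace

section

variable {H : Type*} [NormedAddCommGroup H] [InnerProductSpace ℝ H]

/-- `{|⟪T x, x⟫| : ‖x‖ = 1}` for the rank-one operator `T x = ⟪x, x₁⟫ • x₂`. -/
def rankOneAbsNumericalRange (x₁ x₂ : H) : Set ℝ :=
  {s | ∃ x : H, ‖x‖ = 1 ∧ s = |⟪x, x₁⟫ * ⟪x₂, x⟫|}

lemma abs_inner_mul_inner_le (x x₁ x₂ : H) :
    |⟪x, x₁⟫ * ⟪x₂, x⟫| ≤ ‖x‖ ^ 2 * (‖x₁‖ * ‖x₂‖) := by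
  rw [abs_mul]
  calc |⟪x, x₁⟫| * |⟪x₂, x⟫| ≤ (‖x‖ * ‖x₁‖) * (‖x₂‖ * ‖x‖) :=
        mul_le_mul (abs_real_inner_le_norm x x₁) (abs_real_inner_le_norm x₂ x)
          (abs_nonneg _) (by positivity)
    _ = ‖x‖ ^ 2 * (‖x₁‖ * ‖x₂‖) := by ring

lemma rankOneAbsNumericalRange_bddAbove (x₁ x₂ : H) :
    BddAbove (rankOneAbsNumericalRange x₁ x₂) := by
  refine ⟨‖x₁‖ * ‖x₂‖, ?_⟩
  rintro s ⟨x, hx, rfl⟩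
  simpa [hx] using abs_inner_mul_inner_le x x₁ x₂

lemma rankOneAbsNumericalRange_neg_right (x₁ x₂ : H) :
    rankOneAbsNumericalRange x₁ (-x₂) = rankOneAbsNumericalRange x₁ x₂ := by
  simp only [rankOneAbsNumericalRange, inner_neg_left, mul_neg, abs_neg]

lemma abs_inner_mul_inner_inv_norm_smul (v x₁ x₂ : H) :
    |⟪‖v‖⁻¹ • v, x₁⟫ * ⟪x₂, ‖v‖⁻¹ • v⟫| = |⟪v, x₁⟫ * ⟪x₂, v⟫| / ‖v‖ ^ 2 := by
  rw [real_inner_smul_left, real_inner_smul_right, abs_mul, abs_mul, abs_mul, abs_mul,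
    abs_inv, abs_norm]
  ring

lemma half_le_sSup_rankOneAbsNumericalRange_of_inner_nonneg {x₁ x₂ : H}
    (h₁ : ‖x₁‖ = 1) (h₂ : ‖x₂‖ = 1) (hc : 0 ≤ ⟪x₁, x₂⟫) :
    1 / 2 ≤ sSup (rankOneAbsNumericalRange x₁ x₂) := by
  set v := x₁ + x₂
  have hv₁ : ⟪v, x₁⟫ = 1 + ⟪x₁, x₂⟫ := by
    rw [inner_add_left, real_inner_self_eq_norm_sq, h₁, real_inner_comm]; ring
  have hv₂ : ⟪x₂, v⟫ = 1 + ⟪x₁, x₂⟫ := by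
    rw [inner_add_right, real_inner_self_eq_norm_sq, h₂, real_inner_comm]; ring
  have hv : ‖v‖ ^ 2 = 2 * (1 + ⟪x₁, x₂⟫) := by
    rw [norm_add_sq_real, h₁, h₂]; ring
  have hmem : (1 + ⟪x₁, x₂⟫) / 2 ∈ rankOneAbsNumericalRange x₁ x₂ := by
    have hv0 : v ≠ 0 := by
      intro h
      rw [h, norm_zero] at hv
      linarith
    refine ⟨‖v‖⁻¹ • v, by simpa using norm_smul_inv_norm (𝕜 := ℝ) hv0, ?_⟩
    rw [abs_inner_mul_inner_inv_norm_smul, hv₁, hv₂, hv, abs_mul_self]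
    field_simp
  linarith [le_csSup (rankOneAbsNumericalRange_bddAbove x₁ x₂) hmem]

lemma half_le_sSup_rankOneAbsNumericalRange {x₁ x₂ : H} (h₁ : ‖x₁‖ = 1)
    (h₂ : ‖x₂‖ = 1) :
    1 / 2 ≤ sSup (rankOneAbsNumericalRange x₁ x₂) := by
  rcases le_total 0 ⟪x₁, x₂⟫ with hc | hc
  · exact half_le_sSup_rankOneAbsNumericalRange_of_inner_nonneg h₁ h₂ hc
  · rw [← rankOneAbsNumericalRange_neg_right]
    exact half_le_sSup_rankOneAbsNumericalRange_of_inner_nonneg h₁ (by rwa [norm_neg])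
      (by rw [inner_neg_right]; linarith)

lemma inner_sq_add_inner_sq_le_norm_sq {x x₁ x₂ : H} (h₁ : ‖x₁‖ = 1) (h₂ : ‖x₂‖ = 1)
    (h : ⟪x₁, x₂⟫ = 0) : ⟪x₁, x⟫ ^ 2 + ⟪x₂, x⟫ ^ 2 ≤ ‖x‖ ^ 2 := by
  have hon : Orthonormal ℝ ![x₁, x₂] := by
    rw [orthonormal_iff_ite]
    simp [Fin.forall_fin_two, h₁, h₂, h, (real_inner_comm x₁ x₂).trans h]
  simpa [Fin.sum_univ_two] using hon.sum_inner_products_le x (s := Finset.univ)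

lemma sSup_rankOneAbsNumericalRange_of_inner_eq_zero {x₁ x₂ : H} (h₁ : ‖x₁‖ = 1) (h₂ : ‖x₂‖ = 1)
    (h : ⟪x₁, x₂⟫ = 0) : sSup (rankOneAbsNumericalRange x₁ x₂) = 1 / 2 := by
  refine le_antisymm ?_ (half_le_sSup_rankOneAbsNumericalRange h₁ h₂)
  have hne : (rankOneAbsNumericalRange x₁ x₂).Nonempty := ⟨_, x₁, h₁, rfl⟩
  refine csSup_le hne ?_
  rintro s ⟨x, hx, rfl⟩
  have hbessel := inner_sq_add_inner_sq_le_norm_sq (x := x) h₁ h₂ h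
  rw [hx, real_inner_comm x x₁, ← sq_abs, ← sq_abs ⟪x₂, x⟫] at hbessel
  rw [abs_mul]
  linarith [two_mul_le_add_sq |⟪x, x₁⟫| |⟪x₂, x⟫|]

lemma exists_norm_eq_one_inner_eq_zero (hdim : 1 < Module.rank ℝ H) (x : H) :
    ∃ y : H, ‖y‖ = 1 ∧ ⟪x, y⟫ = 0 := by
  have hK : (ℝ ∙ x)ᗮ ≠ ⊥ := by
    rw [Ne, Submodule.orthogonal_eq_bot_iff]
    intro htop
    have := rank_span_le (R := ℝ) ({x} : Set H)
    rw [htop, rank_top, Cardinal.mk_singleton] at this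
    exact hdim.not_ge this
  obtain ⟨y, hy, hy0⟩ := (Submodule.ne_bot_iff _).mp hK
  refine ⟨‖y‖⁻¹ • y, by simpa using norm_smul_inv_norm (𝕜 := ℝ) hy0, ?_⟩
  rw [real_inner_smul_right, Submodule.mem_orthogonal_singleton_iff_inner_right.mp hy, mul_zero]

end

theorem stmt12_general {H : Type*} [NormedAddCommGroup H] [InnerProductSpace ℝ H]
    (hdim : 2 ≤ Module.rank ℝ H) :
    sInf {r : ℝ | ∃ x₁ x₂ : H, ‖x₁‖ = 1 ∧ ‖x₂‖ = 1 ∧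
        r = sSup {s : ℝ | ∃ x : H, ‖x‖ = 1 ∧
          s = |(inner ℝ x x₁ : ℝ) * (inner ℝ x₂ x : ℝ)|}} = 1 / 2 := by
  have hdim' : 1 < Module.rank ℝ H := lt_of_lt_of_le Nat.one_lt_ofNat hdim
  have : Nontrivial H := rank_pos_iff_nontrivial.mp (zero_lt_one.trans hdim')
  obtain ⟨x₁, h₁⟩ := exists_norm_eq H zero_le_one
  obtain ⟨x₂, h₂, h⟩ := exists_norm_eq_one_inner_eq_zero hdim' x₁
  refine IsLeast.csInf_eq ⟨?_, ?_⟩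
  · exact ⟨x₁, x₂, h₁, h₂, (sSup_rankOneAbsNumericalRange_of_inner_eq_zero h₁ h₂ h).symm⟩
  · rintro r ⟨y₁, y₂, hy₁, hy₂, rfl⟩
    exact half_le_sSup_rankOneAbsNumericalRange hy₁ hy₂

/-- For a real Hilbert space `H` with `dim H ≥ 2`, the rank-one numerical index equals
`1/2`: the infimum of `v(T)` over norm-one rank-one operators `T x = ⟪x, x₁⟫ x₂`
(`‖x₁‖ = ‖x₂‖ = 1`) is `1/2`, where `v(T) = sup_{‖x‖=1} |⟨Tx, x⟩|`. -/
theorem stmt12 {H : Type*} [NormedAddCommGroup H] [InnerProductSpace ℝ H]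
    [CompleteSpace H] (hdim : 2 ≤ Module.rank ℝ H) :
    sInf {r : ℝ | ∃ x₁ x₂ : H, ‖x₁‖ = 1 ∧ ‖x₂‖ = 1 ∧
        r = sSup {s : ℝ | ∃ x : H, ‖x‖ = 1 ∧
          s = |(inner ℝ x x₁ : ℝ) * (inner ℝ x₂ x : ℝ)|}} = 1 / 2 :=
  stmt12_general hdim
end

section
/- Let H be a real Hilbert space, x₁, x₂ ∈ H unit vectors with |⟨x₁, x₂⟩| < 1, and Tx = ⟨x, x₁⟩ x₂. Then there exists a unit vector x ∈ H with ⟨x, x⟩ = 1 such that |⟨Tx, x⟩| ≥ 1/2. -/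
/-!
After replacing `x₂` by `-x₂` if necessary (which only flips the sign of `⟪Tx, x⟫`) we may
assume `⟪x₁, x₂⟫ ≥ 0`. Then the normalized sum `x` of `x₁` and `x₂` satisfies
`⟪Tx, x⟫ = ⟪x, x₁⟫ ⟪x₂, x⟫ = (1 + ⟪x₁, x₂⟫)² / ‖x₁ + x₂‖² = (1 + ⟪x₁, x₂⟫) / 2 ≥ 1 / 2`.
-/

open RealInnerProductSpace

lemma inner_inv_norm_smul_mul_inner_inv_norm_smul {H : Type*} [NormedAddCommGroup H]
    [InnerProductSpace ℝ H] (a b u : H) :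
    ⟪‖u‖⁻¹ • u, a⟫ * ⟪b, ‖u‖⁻¹ • u⟫ = ⟪u, a⟫ * ⟪b, u⟫ / ‖u‖ ^ 2 := by
  rw [real_inner_smul_left, real_inner_smul_right]
  ring

lemma exists_norm_eq_one_half_le_inner_mul_inner {H : Type*} [NormedAddCommGroup H]
    [InnerProductSpace ℝ H] {a b : H} (ha : ‖a‖ = 1) (hb : ‖b‖ = 1) (hab : 0 ≤ ⟪a, b⟫) :
    ∃ x : H, ‖x‖ = 1 ∧ 1 / 2 ≤ ⟪x, a⟫ * ⟪b, x⟫ := by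
  have hsq : ‖a + b‖ ^ 2 = 2 * (1 + ⟪a, b⟫) := by
    rw [norm_add_sq_real, ha, hb]; ring
  have hpos : 0 < ‖a + b‖ := by nlinarith [norm_nonneg (a + b)]
  refine ⟨‖a + b‖⁻¹ • (a + b), ?_, ?_⟩
  · rw [norm_smul, norm_inv, norm_norm, inv_mul_cancel₀ hpos.ne']
  · have hua : ⟪a + b, a⟫ = 1 + ⟪a, b⟫ := by
      rw [inner_add_left, real_inner_self_eq_norm_sq, ha, real_inner_comm]; ring
    have hbu : ⟪b, a + b⟫ = 1 + ⟪a, b⟫ := by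
      rw [inner_add_right, real_inner_self_eq_norm_sq, hb, real_inner_comm]; ring
    rw [inner_inv_norm_smul_mul_inner_inv_norm_smul, hua, hbu, hsq]
    field_simp
    linarith

theorem stmt14_general {H : Type*} [NormedAddCommGroup H] [InnerProductSpace ℝ H]
    (x₁ x₂ : H) (hx₁ : ‖x₁‖ = 1) (hx₂ : ‖x₂‖ = 1) :
    ∃ x : H, ‖x‖ = 1 ∧ (1 : ℝ) / 2 ≤ |(inner ℝ ((inner ℝ x x₁ : ℝ) • x₂) x : ℝ)| := by
  obtain ⟨θ, hθ, hθx⟩ : ∃ θ : ℝ, |θ| = 1 ∧ 0 ≤ ⟪x₁, θ • x₂⟫ := by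
    rcases le_total 0 ⟪x₁, x₂⟫ with h | h
    · exact ⟨1, abs_one, by rwa [one_smul]⟩
    · exact ⟨-1, by simp, by rw [real_inner_smul_right]; linarith⟩
  obtain ⟨x, hx, hhalf⟩ := exists_norm_eq_one_half_le_inner_mul_inner hx₁
    (by rw [norm_smul, Real.norm_eq_abs, hθ, hx₂, one_mul]) hθx
  refine ⟨x, hx, ?_⟩
  calc (1 : ℝ) / 2 ≤ ⟪x, x₁⟫ * ⟪θ • x₂, x⟫ := hhalf
    _ ≤ |⟪x, x₁⟫ * ⟪θ • x₂, x⟫| := le_abs_self _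
    _ = |⟪⟪x, x₁⟫ • x₂, x⟫| := by
      rw [real_inner_smul_left, real_inner_smul_left, abs_mul, abs_mul, abs_mul, hθ, one_mul]

/-- If `x₁, x₂` are unit vectors in a real Hilbert space with `|⟪x₁, x₂⟫| < 1` and
`T x = ⟪x, x₁⟫ x₂`, then there is a unit vector `x` with `|⟨Tx, x⟩| ≥ 1/2`. -/
theorem stmt14 {H : Type*} [NormedAddCommGroup H] [InnerProductSpace ℝ H]
    (x₁ x₂ : H) (hx₁ : ‖x₁‖ = 1) (hx₂ : ‖x₂‖ = 1)
    (hip : |(inner ℝ x₁ x₂ : ℝ)| < 1) :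
    ∃ x : H, ‖x‖ = 1 ∧ (1 : ℝ) / 2 ≤ |(inner ℝ ((inner ℝ x x₁ : ℝ) • x₂) x : ℝ)| :=
  stmt14_general x₁ x₂ hx₁ hx₂
end

section
/- Let (Ω, Σ, μ) be an atomless finite measure space, 1 ≤ p < ∞, T a narrow bounded linear operator on L_p(μ), x ∈ L_p(μ) a simple function with Tx = y, Ω = D₁ ⊔ ... ⊔ D_ℓ a measurable partition, and ε > 0. Then there exists a partition Ω = A ⊔ B such that (i) ‖x·1_A‖^p = ‖x·1_B‖^p = ‖x‖^p/2, (ii) μ(D_j ∩ A) = μ(D_j ∩ B) = μ(D_j)/2 for each j, and (iii) ‖T(x·1_A) - y/2‖ < ε and ‖T(x·1_B) - y/2‖ < ε. -/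
open MeasureTheory

variable {Ω : Type*} [MeasurableSpace Ω] {μ : Measure Ω} {pe : ENNReal} [Fact (1 ≤ pe)]

/-- An operator `T` on `L_p(μ)` is narrow if for every measurable `A` and `ε > 0` there
is `x ∈ L_p(μ)` with `x² = 1_A`, `∫ x dμ = 0` and `‖Tx‖ < ε`. -/
def IsNarrow (μ : Measure Ω) (pe : ENNReal) [Fact (1 ≤ pe)]
    (T : Lp ℝ pe μ →L[ℝ] Lp ℝ pe μ) : Prop :=
  ∀ A : Set Ω, MeasurableSet A → ∀ ε : ℝ, 0 < ε →
    ∃ x : Lp ℝ pe μ, (∀ᵐ ω ∂μ, (x ω) ^ 2 = A.indicator (fun _ => (1 : ℝ)) ω) ∧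
      (∫ ω, x ω ∂μ) = 0 ∧ ‖T x‖ < ε

/-- The restriction `x·1_A` of `x ∈ L_p(μ)` to a measurable set `A`, as an element of
`L_p(μ)`. -/
noncomputable def lpRestrict (x : Lp ℝ pe μ) {A : Set Ω} (hA : MeasurableSet A) :
    Lp ℝ pe μ :=
  MemLp.toLp (A.indicator x) ((Lp.memLp x).indicator hA)

open Function
open scoped ENNReal

/-!
Narrowness applied to a set `E` yields a sign function `g = 1_P - 1_{E \ P}` with `∫ g = 0`,
so that `P` bisects `E`, and with `‖T g‖` as small as we like. Do this for every cell
`E (c, j) = {s = c} ∩ D j` of the common refinement of the level sets of `s` and of the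
partition `D`, and let `A` be the union of the positive parts `P (c, j)`. Then `A` bisects every
cell, which gives (i) and (ii), and `x 1_A - x 1_{Aᶜ} = ∑ c • g (c, j)`; since
`x 1_A + x 1_{Aᶜ} = x`, both `T (x 1_A) - y / 2` and `T (x 1_{Aᶜ}) - y / 2` have norm
`‖T (∑ c • g (c, j))‖ / 2`.
-/

lemma inter_biUnion_eq_of_subset {ι α : Type*} {E P : ι → Set α}
    (hdisj : Pairwise (Disjoint on E)) (hPE : ∀ k, P k ⊆ E k) {S : Finset ι} {k : ι}
    (hk : k ∈ S) : E k ∩ ⋃ i ∈ S, P i = P k := by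
  refine Set.Subset.antisymm ?_ fun ω hω => ⟨hPE k hω, Set.mem_biUnion hk hω⟩
  rintro ω ⟨hωE, hωA⟩
  obtain ⟨i, -, hωP⟩ := Set.mem_iUnion₂.mp hωA
  obtain rfl : i = k := by_contra fun hik => Set.disjoint_left.mp (hdisj hik) (hPE i hωP) hωE
  exact hωP

lemma indicator_sub_indicator_compl_eq_sum {α ι : Type*} {E P : ι → Set α}
    (hdisj : Pairwise (Disjoint on E)) (hPE : ∀ k, P k ⊆ E k) {S : Finset ι}
    {f : α → ℝ} {c : ι → ℝ} {ω : α} {k : ι} (hk : k ∈ S) (hω : ω ∈ E k) (hf : f ω = c k) :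
    (⋃ i ∈ S, P i).indicator f ω - (⋃ i ∈ S, P i)ᶜ.indicator f ω =
      ∑ i ∈ S, c i * ((P i).indicator 1 ω - (E i \ P i).indicator 1 ω) := by
  have hmem : ω ∈ ⋃ i ∈ S, P i ↔ ω ∈ P k := by
    rw [← inter_biUnion_eq_of_subset hdisj hPE hk]
    exact ⟨fun h => ⟨hω, h⟩, And.right⟩
  rw [Finset.sum_eq_single_of_mem k hk fun i _ hik => ?_]
  · by_cases h : ω ∈ P k
    · rw [Set.indicator_of_mem (hmem.mpr h), Set.indicator_of_notMem (not_not_intro (hmem.mpr h)),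
        Set.indicator_of_mem h, Set.indicator_of_notMem fun h' => h'.2 h]
      simp [hf]
    · rw [Set.indicator_of_notMem (mt hmem.mp h), Set.indicator_of_mem (mt hmem.mp h),
        Set.indicator_of_notMem h, Set.indicator_of_mem (show ω ∈ E k \ P k from ⟨hω, h⟩)]
      simp [hf]
  · have hωi : ω ∉ E i := fun hi => Set.disjoint_left.mp (hdisj hik) hi hω
    simp [Set.indicator_of_notMem (fun h => hωi (hPE i h)),
      Set.indicator_of_notMem (fun h : ω ∈ E i \ P i => hωi h.1)]

lemma pairwise_disjoint_preimage_singleton_inter {α β ι : Type*} (s : α → β) {D : ι → Set α}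
    (hD : Pairwise (Disjoint on D)) :
    Pairwise (Disjoint on fun k : β × ι => s ⁻¹' {k.1} ∩ D k.2) := by
  rintro ⟨c, j⟩ ⟨c', j'⟩ hne
  by_cases hc : c = c'
  · subst hc
    exact (hD fun hj => hne (Prod.ext rfl hj)).mono Set.inter_subset_right Set.inter_subset_right
  · exact ((Set.disjoint_singleton.mpr hc).preimage s).mono Set.inter_subset_left
      Set.inter_subset_left

lemma measure_eq_half_of_eq_measure_diff {P E : Set Ω} (hPE : P ⊆ E)
    (hP : MeasurableSet P) (h : μ P = μ (E \ P)) : μ P = μ E / 2 := by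
  rw [ENNReal.eq_div_iff two_ne_zero ENNReal.ofNat_ne_top, two_mul]
  nth_rw 2 [h]
  rw [measure_add_sdiff hP.nullMeasurableSet, Set.union_eq_right.mpr hPE]

lemma measure_inter_compl_eq_half [IsFiniteMeasure μ] {A B : Set Ω} (hA : MeasurableSet A)
    (h : μ (B ∩ A) = μ B / 2) : μ (B ∩ Aᶜ) = μ B / 2 := by
  have hsum := measure_inter_add_sdiff (μ := μ) B hA
  conv_rhs at hsum => rw [← ENNReal.add_halves (μ B)]
  rw [h] at hsum
  rw [← Set.sdiff_eq]
  exact (ENNReal.add_right_inj (by finiteness)).mp hsum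

lemma measure_biUnion_inter_eq_half {ι : Type*} {S : Finset ι} {E : ι → Set Ω}
    (hE : ∀ k, MeasurableSet (E k)) (hdisj : Pairwise (Disjoint on E))
    {A : Set Ω} (hA : MeasurableSet A) (h : ∀ k ∈ S, μ (E k ∩ A) = μ (E k) / 2) :
    μ ((⋃ k ∈ S, E k) ∩ A) = μ (⋃ k ∈ S, E k) / 2 := by
  have hdisjA : Pairwise (Disjoint on fun k => E k ∩ A) := fun i j hij =>
    (hdisj hij).mono Set.inter_subset_left Set.inter_subset_left
  rw [Set.iUnion₂_inter, measure_biUnion_finset (hdisjA.set_pairwise _)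
      fun k _ => (hE k).inter hA,
    measure_biUnion_finset (hdisj.set_pairwise _) fun k _ => hE k]
  simp_rw [div_eq_mul_inv] at h ⊢
  rw [Finset.sum_mul]
  exact Finset.sum_congr rfl h

lemma lintegral_comp_restrict_eq_half {β : Type*} (s : SimpleFunc Ω β) (G : β → ℝ≥0∞)
    {A : Set Ω} (h : ∀ c ∈ s.range, μ (s ⁻¹' {c} ∩ A) = μ (s ⁻¹' {c}) / 2) :
    ∫⁻ ω in A, G (s ω) ∂μ = (∫⁻ ω, G (s ω) ∂μ) / 2 := by
  have hcoe : (fun ω => G (s ω)) = s.map G := (SimpleFunc.coe_map G s).symm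
  rw [hcoe, SimpleFunc.lintegral_eq_lintegral, SimpleFunc.lintegral_eq_lintegral,
    SimpleFunc.map_lintegral, SimpleFunc.map_lintegral, div_eq_mul_inv, Finset.sum_mul]
  refine Finset.sum_congr rfl fun c hc => ?_
  rw [Measure.restrict_apply (s.measurableSet_preimage _), h c hc, div_eq_mul_inv, mul_assoc]

set_option linter.unusedSectionVars false in
lemma coeFn_lpRestrict (x : Lp ℝ pe μ) {A : Set Ω} (hA : MeasurableSet A) :
    lpRestrict x hA =ᵐ[μ] A.indicator x :=
  MemLp.coeFn_toLp _

lemma lpRestrict_add_lpRestrict_compl (x : Lp ℝ pe μ) {A : Set Ω} (hA : MeasurableSet A) :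
    lpRestrict x hA + lpRestrict x hA.compl = x := by
  refine Lp.ext ?_
  filter_upwards [Lp.coeFn_add (lpRestrict x hA) (lpRestrict x hA.compl),
    coeFn_lpRestrict x hA, coeFn_lpRestrict x hA.compl] with ω h hAω hAcω
  rw [h, Pi.add_apply, hAω, hAcω, Set.indicator_self_add_compl_apply]

lemma norm_lpRestrict_rpow_eq_half (hpe : pe ≠ ⊤) {x : Lp ℝ pe μ} {s : SimpleFunc Ω ℝ}
    (hxs : (x : Ω → ℝ) =ᵐ[μ] s) {A : Set Ω} (hA : MeasurableSet A)
    (h : ∀ c ∈ s.range, μ (s ⁻¹' {c} ∩ A) = μ (s ⁻¹' {c}) / 2) :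
    ‖lpRestrict x hA‖ ^ pe.toReal = ‖x‖ ^ pe.toReal / 2 := by
  have hpe0 : pe ≠ 0 := (zero_lt_one.trans_le Fact.out).ne'
  have hnorm : ∀ ν : Measure Ω, (eLpNorm s pe ν).toReal ^ pe.toReal =
      (∫⁻ ω, ‖s ω‖ₑ ^ pe.toReal ∂ν).toReal := fun ν => by
    rw [eLpNorm_eq_lintegral_rpow_enorm_toReal hpe0 hpe, ENNReal.toReal_rpow,
      ← ENNReal.rpow_mul, one_div_mul_cancel (ENNReal.toReal_pos hpe0 hpe).ne', ENNReal.rpow_one]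
  rw [lpRestrict, Lp.norm_toLp, eLpNorm_indicator_eq_eLpNorm_restrict hA, Lp.norm_def,
    eLpNorm_congr_ae hxs, eLpNorm_congr_ae (ae_restrict_of_ae hxs), hnorm, hnorm,
    lintegral_comp_restrict_eq_half s (fun c => ‖c‖ₑ ^ pe.toReal) h, ENNReal.toReal_div,
    ENNReal.toReal_ofNat]

lemma norm_map_sub_half_smul_of_add_eq {E F : Type*} [NormedAddCommGroup E] [NormedSpace ℝ E]
    [NormedAddCommGroup F] [NormedSpace ℝ F] (T : E →L[ℝ] F) {u v x : E} (h : u + v = x) :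
    ‖T u - (2 : ℝ)⁻¹ • T x‖ = ‖T (u - v)‖ / 2 := by
  rw [← h, ← map_smul, ← map_sub, show u - (2 : ℝ)⁻¹ • (u + v) = (2 : ℝ)⁻¹ • (u - v) by module,
    map_smul, norm_smul]
  norm_num
  ring

theorem IsNarrow.exists_halving [IsFiniteMeasure μ] {T : Lp ℝ pe μ →L[ℝ] Lp ℝ pe μ}
    (hT : IsNarrow μ pe T) {E : Set Ω} (hE : MeasurableSet E) {δ : ℝ} (hδ : 0 < δ) :
    ∃ P ⊆ E, MeasurableSet P ∧ μ P = μ E / 2 ∧ ∃ g : Lp ℝ pe μ,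
      (g : Ω → ℝ) =ᵐ[μ] P.indicator 1 - (E \ P).indicator 1 ∧ ‖T g‖ < δ := by
  obtain ⟨g, hg_sq, hg_int, hTg⟩ := hT E hE δ hδ
  have hg_meas := Lp.aestronglyMeasurable g
  set P := E ∩ hg_meas.mk g ⁻¹' {1}
  have hP : MeasurableSet P :=
    hE.inter (hg_meas.stronglyMeasurable_mk.measurable (measurableSet_singleton 1))
  have hg : (g : Ω → ℝ) =ᵐ[μ] P.indicator 1 - (E \ P).indicator 1 := by
    filter_upwards [hg_sq, hg_meas.ae_eq_mk] with ω hsq hmk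
    by_cases hω : ω ∈ E
    · rw [Set.indicator_of_mem hω, sq_eq_one_iff] at hsq
      have hωP : ω ∈ P ↔ g ω = 1 := by simp [P, hω, hmk]
      by_cases h : ω ∈ P
      · simp [h, ← hωP]
      · simpa [h, Set.indicator_of_mem (show ω ∈ E \ P from ⟨hω, h⟩)]
          using hsq.resolve_left (mt hωP.mpr h)
    · rw [Set.indicator_of_notMem hω, sq_eq_zero_iff] at hsq
      simp [P, hω, hsq]
  refine ⟨P, Set.inter_subset_left, hP, measure_eq_half_of_eq_measure_diff
    Set.inter_subset_left hP ?_, g, hg, hTg⟩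
  have hint := integral_congr_ae hg
  simp only [Pi.sub_apply] at hint
  rw [hg_int, integral_sub ((integrable_const 1).indicator hP)
    ((integrable_const 1).indicator (hE.diff hP)), integral_indicator_one hP,
    integral_indicator_one (hE.diff hP), eq_comm, sub_eq_zero] at hint
  exact (measureReal_eq_measureReal_iff).mp hint

theorem IsNarrow.exists_bisecting_set [IsFiniteMeasure μ] {T : Lp ℝ pe μ →L[ℝ] Lp ℝ pe μ}
    (hT : IsNarrow μ pe T) {ι : Type*} (S : Finset ι) {E : ι → Set Ω}
    (hE : ∀ k, MeasurableSet (E k)) (hdisj : Pairwise (Disjoint on E))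
    (hcov : ∀ ω, ∃ k ∈ S, ω ∈ E k) {x : Lp ℝ pe μ} {c : ι → ℝ}
    (hx : ∀ᵐ ω ∂μ, ∀ k ∈ S, ω ∈ E k → x ω = c k) {ε : ℝ} (hε : 0 < ε) :
    ∃ A : Set Ω, ∃ hA : MeasurableSet A, (∀ k ∈ S, μ (E k ∩ A) = μ (E k) / 2) ∧
      ‖T (lpRestrict x hA - lpRestrict x hA.compl)‖ < ε := by
  set C := ∑ k ∈ S, |c k|
  have hδ : 0 < ε / (C + 1) := div_pos hε (by positivity)
  choose P hPE hP hPhalf g hg hTg using fun k => hT.exists_halving (hE k) hδ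
  have hA : MeasurableSet (⋃ k ∈ S, P k) := .biUnion S.countable_toSet fun k _ => hP k
  refine ⟨_, hA, fun k hk => by rw [inter_biUnion_eq_of_subset hdisj hPE hk, hPhalf k], ?_⟩
  have hdecomp : lpRestrict x hA - lpRestrict x hA.compl = ∑ k ∈ S, c k • g k := by
    refine Lp.ext ?_
    filter_upwards [Lp.coeFn_sub (lpRestrict x hA) (lpRestrict x hA.compl),
      coeFn_lpRestrict x hA, coeFn_lpRestrict x hA.compl,
      Lp.coeFn_fun_finsetSum S fun k => c k • g k, hx,
      (Filter.eventually_all_finset S).mpr fun k _ => hg k,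
      (Filter.eventually_all_finset S).mpr fun k _ => Lp.coeFn_smul (c k) (g k)]
      with ω hsub hAω hAcω hsum hxω hgω hsmul
    obtain ⟨k, hk, hω⟩ := hcov ω
    rw [hsub, Pi.sub_apply, hAω, hAcω, hsum,
      indicator_sub_indicator_compl_eq_sum hdisj hPE hk hω (hxω k hk hω)]
    refine Finset.sum_congr rfl fun i hi => ?_
    rw [hsmul i hi, Pi.smul_apply, hgω i hi, smul_eq_mul, Pi.sub_apply]
  calc ‖T (lpRestrict x hA - lpRestrict x hA.compl)‖ = ‖∑ k ∈ S, c k • T (g k)‖ := by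
        simp_rw [hdecomp, map_sum, map_smul]
    _ ≤ ∑ k ∈ S, |c k| * ‖T (g k)‖ := by
        simpa only [norm_smul, Real.norm_eq_abs] using norm_sum_le S fun k => c k • T (g k)
    _ ≤ C * (ε / (C + 1)) := by
        rw [Finset.sum_mul]
        gcongr with k
        exact (hTg k).le
    _ < ε := by
        rw [mul_div_assoc', div_lt_iff₀ (by positivity)]
        nlinarith

theorem IsNarrow.exists_bisecting_set_of_simpleFunc [IsFiniteMeasure μ]
    {T : Lp ℝ pe μ →L[ℝ] Lp ℝ pe μ} (hT : IsNarrow μ pe T) {x : Lp ℝ pe μ}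
    {s : SimpleFunc Ω ℝ} (hxs : (x : Ω → ℝ) =ᵐ[μ] s) {ι : Type*} [Fintype ι] {D : ι → Set Ω}
    (hD : ∀ j, MeasurableSet (D j)) (hDdisj : Pairwise (Disjoint on D))
    (hDcov : ⋃ j, D j = Set.univ) {ε : ℝ} (hε : 0 < ε) :
    ∃ A : Set Ω, ∃ hA : MeasurableSet A,
      (∀ c ∈ s.range, μ (s ⁻¹' {c} ∩ A) = μ (s ⁻¹' {c}) / 2) ∧
      (∀ j, μ (D j ∩ A) = μ (D j) / 2) ∧
      ‖T (lpRestrict x hA - lpRestrict x hA.compl)‖ < ε := by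
  set E : ℝ × ι → Set Ω := fun k => s ⁻¹' {k.1} ∩ D k.2
  have hE : ∀ k, MeasurableSet (E k) := fun k => (s.measurableSet_fiber k.1).inter (hD k.2)
  have hEdisj : Pairwise (Disjoint on E) := pairwise_disjoint_preimage_singleton_inter s hDdisj
  have hEcov : ∀ ω, ∃ k ∈ s.range ×ˢ Finset.univ, ω ∈ E k := fun ω => by
    obtain ⟨j, hj⟩ := Set.mem_iUnion.mp (hDcov ▸ Set.mem_univ ω)
    exact ⟨(s ω, j), by simp, rfl, hj⟩
  have hxE : ∀ᵐ ω ∂μ, ∀ k ∈ s.range ×ˢ Finset.univ, ω ∈ E k → x ω = k.1 := by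
    filter_upwards [hxs] with ω hω k _ hk
    exact hω.trans hk.1
  obtain ⟨A, hA, hhalf, hTA⟩ := hT.exists_bisecting_set _ hE hEdisj hEcov hxE hε
  refine ⟨A, hA, fun c hc => ?_, fun j => ?_, hTA⟩
  · have hcover : s ⁻¹' {c} = ⋃ j ∈ Finset.univ, E (c, j) := by
      simp only [E, Finset.mem_univ, Set.iUnion_true, ← Set.inter_iUnion, hDcov, Set.inter_univ]
    rw [hcover]
    exact measure_biUnion_inter_eq_half (fun j => hE _)
      (hEdisj.comp_of_injective fun j j' h => (Prod.ext_iff.mp h).2) hA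
      fun j _ => hhalf _ (by simp [hc])
  · have hcover : D j = ⋃ c ∈ s.range, E (c, j) := by
      ext ω
      simp [E]
    rw [hcover]
    exact measure_biUnion_inter_eq_half (fun c => hE _)
      (hEdisj.comp_of_injective fun c c' h => (Prod.ext_iff.mp h).1) hA
      fun c hc => hhalf _ (by simp [hc])

theorem stmt15_general [IsFiniteMeasure μ]
    (p : ℝ) (hp : 1 ≤ p) (hpe : pe = ENNReal.ofReal p)
    (T : Lp ℝ pe μ →L[ℝ] Lp ℝ pe μ) (hT : IsNarrow μ pe T)
    (x : Lp ℝ pe μ) (s : SimpleFunc Ω ℝ) (hxs : (x : Ω → ℝ) =ᵐ[μ] s)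
    (y : Lp ℝ pe μ) (hy : T x = y)
    (ℓ : ℕ) (D : Fin ℓ → Set Ω) (hD : ∀ j, MeasurableSet (D j))
    (hDdisj : Pairwise (Function.onFun Disjoint D)) (hDcov : (⋃ j, D j) = Set.univ)
    (ε : ℝ) (hε : 0 < ε) :
    ∃ A : Set Ω, ∃ hA : MeasurableSet A,
      ‖lpRestrict x hA‖ ^ p = ‖x‖ ^ p / 2 ∧
      ‖lpRestrict x hA.compl‖ ^ p = ‖x‖ ^ p / 2 ∧
      (∀ j, μ (D j ∩ A) = μ (D j) / 2 ∧ μ (D j ∩ Aᶜ) = μ (D j) / 2) ∧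
      ‖T (lpRestrict x hA) - (2 : ℝ)⁻¹ • y‖ < ε ∧
      ‖T (lpRestrict x hA.compl) - (2 : ℝ)⁻¹ • y‖ < ε := by
  subst hy
  have hpe_top : pe ≠ ⊤ := hpe ▸ ENNReal.ofReal_ne_top
  have hp_toReal : pe.toReal = p := by rw [hpe, ENNReal.toReal_ofReal (by linarith)]
  obtain ⟨A, hA, hfiber, hDhalf, hTA⟩ :=
    hT.exists_bisecting_set_of_simpleFunc hxs hD hDdisj hDcov hε
  have hsplit := lpRestrict_add_lpRestrict_compl x hA
  refine ⟨A, hA, ?_, ?_, fun j => ⟨hDhalf j, measure_inter_compl_eq_half hA (hDhalf j)⟩, ?_, ?_⟩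
  · rw [← hp_toReal]
    exact norm_lpRestrict_rpow_eq_half hpe_top hxs hA hfiber
  · rw [← hp_toReal]
    exact norm_lpRestrict_rpow_eq_half hpe_top hxs hA.compl
      fun c hc => measure_inter_compl_eq_half hA (hfiber c hc)
  · rw [norm_map_sub_half_smul_of_add_eq T hsplit]
    linarith [norm_nonneg (T (lpRestrict x hA - lpRestrict x hA.compl))]
  · rw [norm_map_sub_half_smul_of_add_eq T ((add_comm _ _).trans hsplit), ← norm_neg, ← map_neg,
      neg_sub]
    linarith [norm_nonneg (T (lpRestrict x hA - lpRestrict x hA.compl))]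

/-- Lemma on halving: for a narrow `T` on `L_p(μ)` over an atomless finite measure, a
simple `x` with `Tx = y`, a finite measurable partition `Ω = D₁ ⊔ … ⊔ D_ℓ` and `ε > 0`,
there is a partition `Ω = A ⊔ Aᶜ` with (i) `‖x1_A‖^p = ‖x1_{Aᶜ}‖^p = ‖x‖^p/2`,
(ii) `μ(D_j ∩ A) = μ(D_j ∩ Aᶜ) = μ(D_j)/2`, (iii) `‖T(x1_A) - y/2‖ < ε` and
`‖T(x1_{Aᶜ}) - y/2‖ < ε`. -/
theorem stmt15 [IsFiniteMeasure μ]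
    (hμ : ∀ A : Set Ω, MeasurableSet A → 0 < μ A →
      ∃ B ⊆ A, MeasurableSet B ∧ 0 < μ B ∧ μ B < μ A)
    (p : ℝ) (hp : 1 ≤ p) (hpe : pe = ENNReal.ofReal p)
    (T : Lp ℝ pe μ →L[ℝ] Lp ℝ pe μ) (hT : IsNarrow μ pe T)
    (x : Lp ℝ pe μ) (s : SimpleFunc Ω ℝ) (hxs : (x : Ω → ℝ) =ᵐ[μ] s)
    (y : Lp ℝ pe μ) (hy : T x = y)
    (ℓ : ℕ) (D : Fin ℓ → Set Ω) (hD : ∀ j, MeasurableSet (D j))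
    (hDdisj : Pairwise (Function.onFun Disjoint D)) (hDcov : (⋃ j, D j) = Set.univ)
    (ε : ℝ) (hε : 0 < ε) :
    ∃ A : Set Ω, ∃ hA : MeasurableSet A,
      ‖lpRestrict x hA‖ ^ p = ‖x‖ ^ p / 2 ∧
      ‖lpRestrict x hA.compl‖ ^ p = ‖x‖ ^ p / 2 ∧
      (∀ j, μ (D j ∩ A) = μ (D j) / 2 ∧ μ (D j ∩ Aᶜ) = μ (D j) / 2) ∧
      ‖T (lpRestrict x hA) - (2 : ℝ)⁻¹ • y‖ < ε ∧
      ‖T (lpRestrict x hA.compl) - (2 : ℝ)⁻¹ • y‖ < ε :=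
  stmt15_general p hp hpe T hT x s hxs y hy ℓ D hD hDdisj hDcov ε hε
end

section
/- Let (Ω, Σ, μ) be an atomless finite measure space, 1 ≤ p < ∞, T a narrow bounded linear operator on L_p(μ), and x, y ∈ L_p(μ) simple functions with Tx = y. Then for each n ∈ ℕ and ε > 0 there exists a partition Ω = A₁ ⊔ ... ⊔ A_{2^n} such that for each k: ‖x·1_{A_k}‖^p = 2^(-n)‖x‖^p, ‖y·1_{A_k}‖^p = 2^(-n)‖y‖^p, and ‖T(x·1_{A_k}) - 2^(-n) y‖ < ε. -/
open MeasureTheory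

variable {Ω : Type*} [MeasurableSpace Ω] {μ : Measure Ω} {pe : ENNReal} [Fact (1 ≤ pe)]

/-!
Narrowness applied to a set `D` gives `u = 1_P - 1_{D∖P}` with `∫ u = 0`, i.e. `μ P = μ (D ∖ P)`,
and `‖T u‖` small. Doing this inside `A` on every level set of the simple function `(x, y)` at
once splits `A = B ⊔ (A ∖ B)` so that each level set is halved, while
`x·1_B - x·1_{A∖B} = ∑ c • u_c` has small image under `T`. As
`T(x·1_B) + T(x·1_{A∖B}) = T(x·1_A)`, both halves then have image close to `½ T(x·1_A)`.
Iterating `n` times from `A = Ω` gives the partition, and the `L_p` norms of `x·1_{A_k}` and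
`y·1_{A_k}` are `2⁻ⁿ` times the full norms because they only depend on how much of each level
set `A_k` contains.
-/

open Set
open scoped ENNReal

section SetLemmas

variable {α β : Type*} {s : α → β} {t : Set β} {P : β → Set α}

lemma biUnion_inter_preimage_singleton (ht : range s ⊆ t) (hP : ∀ c, P c ⊆ s ⁻¹' {c})
    (c : β) : (⋃ c' ∈ t, P c') ∩ s ⁻¹' {c} = P c := by
  ext ω
  simp only [mem_inter_iff, mem_iUnion₂, mem_preimage, mem_singleton_iff]
  constructor
  · rintro ⟨⟨c', -, hω⟩, rfl⟩
    obtain rfl : s ω = c' := hP c' hω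
    exact hω
  · intro hω
    exact ⟨⟨c, ht ⟨ω, hP c hω⟩, hω⟩, hP c hω⟩

lemma diff_biUnion_eq_biUnion_fiber_diff (ht : range s ⊆ t) (hP : ∀ c, P c ⊆ s ⁻¹' {c})
    (A : Set α) : A \ ⋃ c ∈ t, P c = ⋃ c ∈ t, (A ∩ s ⁻¹' {c}) \ P c := by
  ext ω
  simp only [mem_sdiff, mem_inter_iff, mem_iUnion₂, mem_preimage, mem_singleton_iff, not_exists]
  constructor
  · rintro ⟨hωA, hωP⟩
    exact ⟨s ω, ht ⟨ω, rfl⟩, ⟨hωA, rfl⟩, hωP _ (ht ⟨ω, rfl⟩)⟩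
  · rintro ⟨c, -, ⟨hωA, rfl⟩, hωP⟩
    refine ⟨hωA, fun c' _ hω => hωP ?_⟩
    obtain rfl : s ω = c' := hP c' hω
    exact hω

def splitPieces {ι : Type*} (A B : ι → Set α) (ij : ι × Fin 2) : Set α :=
  ![B ij.1, A ij.1 \ B ij.1] ij.2

lemma splitPieces_subset {ι : Type*} {A B : ι → Set α} (hBA : ∀ i, B i ⊆ A i) (ij : ι × Fin 2) :
    splitPieces A B ij ⊆ A ij.1 := by
  obtain ⟨i, j⟩ := ij
  fin_cases j
  exacts [hBA i, sdiff_subset]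

lemma pairwise_disjoint_splitPieces {ι : Type*} {A B : ι → Set α}
    (hdisj : Pairwise (Function.onFun Disjoint A)) (hBA : ∀ i, B i ⊆ A i) :
    Pairwise (Function.onFun Disjoint (splitPieces A B)) := by
  rintro ⟨i, j⟩ ⟨i', j'⟩ hne
  by_cases hi : i = i'
  · subst hi
    have hj : j ≠ j' := fun h => hne (by rw [h])
    fin_cases j <;> fin_cases j' <;> simp at hj ⊢
    exacts [disjoint_sdiff_right, disjoint_sdiff_left]
  · exact (hdisj hi).mono (splitPieces_subset hBA (i, j)) (splitPieces_subset hBA (i', j'))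

lemma iUnion_splitPieces {ι : Type*} {A B : ι → Set α} (hBA : ∀ i, B i ⊆ A i) :
    ⋃ ij, splitPieces A B ij = ⋃ i, A i := by
  rw [iUnion_prod']
  refine iUnion_congr fun i => ?_
  ext ω
  simp only [splitPieces, mem_iUnion, Fin.exists_fin_two, Matrix.cons_val_zero,
    Matrix.cons_val_one]
  rw [← mem_union, union_sdiff_cancel (hBA i)]

end SetLemmas

lemma measure_inter_eq_inv_two_mul {C C' F : Set Ω} (hC' : MeasurableSet C')
    (hF : MeasurableSet F) (hCC' : Disjoint C C') (h : μ (C ∩ F) = μ (C' ∩ F)) :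
    μ (C ∩ F) = 2⁻¹ * μ ((C ∪ C') ∩ F) := by
  rw [union_inter_distrib_right,
    measure_union (hCC'.mono inter_subset_left inter_subset_left) (hC'.inter hF), ← h, ← two_mul,
    ENNReal.inv_mul_cancel_left two_ne_zero ENNReal.ofNat_ne_top]

lemma SimpleFunc.setLIntegral_comp_eq_mul {β : Type*} (s : SimpleFunc Ω β) (h : β → ℝ≥0∞)
    {A : Set Ω} {r : ℝ≥0∞} (hr : ∀ c, μ (A ∩ s ⁻¹' {c}) = r * μ (s ⁻¹' {c})) :
    ∫⁻ ω in A, h (s ω) ∂μ = r * ∫⁻ ω, h (s ω) ∂μ := by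
  have hsum (ν : Measure Ω) : ∫⁻ ω, h (s ω) ∂ν = ∑ c ∈ s.range, h c * ν (s ⁻¹' {c}) := by
    rw [← SimpleFunc.map_lintegral, ← SimpleFunc.lintegral_eq_lintegral]
    rfl
  rw [hsum, hsum, Finset.mul_sum]
  refine Finset.sum_congr rfl fun c _ => ?_
  rw [Measure.restrict_apply (s.measurableSet_fiber c), inter_comm, hr, mul_left_comm]

lemma norm_sub_inv_two_smul_lt {E : Type*} [SeminormedAddCommGroup E] [NormedSpace ℝ E]
    {a b c : E} {ε : ℝ} (hsum : ‖a + b - c‖ < ε) (hdiff : ‖a - b‖ < ε) :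
    ‖a - (2 : ℝ)⁻¹ • c‖ < ε := by
  have h : a - (2 : ℝ)⁻¹ • c = (2 : ℝ)⁻¹ • ((a + b - c) + (a - b)) := by module
  calc ‖a - (2 : ℝ)⁻¹ • c‖ ≤ 2⁻¹ * (‖a + b - c‖ + ‖a - b‖) := by
        rw [h, norm_smul, Real.norm_of_nonneg (by norm_num)]
        gcongr
        exact norm_add_le _ _
    _ < ε := by linarith

section Restriction

omit [Fact (1 ≤ pe)]

lemma lpRestrict_coeFn (x : Lp ℝ pe μ) {A : Set Ω} (hA : MeasurableSet A) :
    ⇑(lpRestrict x hA) =ᵐ[μ] A.indicator x :=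
  MemLp.coeFn_toLp _

lemma lpRestrict_congr (x : Lp ℝ pe μ) {A B : Set Ω} (hA : MeasurableSet A)
    (hB : MeasurableSet B) (h : A = B) : lpRestrict x hA = lpRestrict x hB := by
  subst h
  rfl

lemma lpRestrict_univ (x : Lp ℝ pe μ) : lpRestrict x (MeasurableSet.univ (α := Ω)) = x :=
  Lp.ext <| (lpRestrict_coeFn x _).trans (by rw [indicator_univ])

lemma lpRestrict_union (x : Lp ℝ pe μ) {A B : Set Ω} (hA : MeasurableSet A)
    (hB : MeasurableSet B) (hAB : Disjoint A B) :
    lpRestrict x (hA.union hB) = lpRestrict x hA + lpRestrict x hB := by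
  refine Lp.ext ?_
  filter_upwards [lpRestrict_coeFn x (hA.union hB),
    Lp.coeFn_add (lpRestrict x hA) (lpRestrict x hB), lpRestrict_coeFn x hA,
    lpRestrict_coeFn x hB] with ω hU hadd hA' hB'
  rw [hU, hadd, Pi.add_apply, hA', hB', indicator_union_of_disjoint hAB]

lemma lpRestrict_biUnion_finset {β : Type*} (x : Lp ℝ pe μ) (t : Finset β) {S : β → Set Ω}
    (hS : ∀ c, MeasurableSet (S c)) (hdisj : (t : Set β).PairwiseDisjoint S) :
    lpRestrict x (t.measurableSet_biUnion fun c _ => hS c) = ∑ c ∈ t, lpRestrict x (hS c) := by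
  refine Lp.ext ?_
  filter_upwards [lpRestrict_coeFn x (t.measurableSet_biUnion fun c _ => hS c),
    Lp.coeFn_fun_finsetSum t fun c => lpRestrict x (hS c),
    (Filter.eventually_all_finset t).2 fun c _ => lpRestrict_coeFn x (hS c)] with ω hU hsum hS'
  rw [hU, hsum, Finset.indicator_biUnion_apply t S hdisj]
  exact Finset.sum_congr rfl fun c hc => (hS' c hc).symm

lemma lpRestrict_sub_lpRestrict_diff_eq_smul (x u : Lp ℝ pe μ) {D P : Set Ω}
    (hD : MeasurableSet D) (hP : MeasurableSet P) (hPD : P ⊆ D) {a : ℝ}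
    (hx : ∀ᵐ ω ∂μ, ω ∈ D → x ω = a) (hu : ⇑u =ᵐ[μ] P.indicator 1 - (D \ P).indicator 1) :
    lpRestrict x hP - lpRestrict x (hD.diff hP) = a • u := by
  refine Lp.ext ?_
  filter_upwards [Lp.coeFn_sub (lpRestrict x hP) (lpRestrict x (hD.diff hP)),
    lpRestrict_coeFn x hP, lpRestrict_coeFn x (hD.diff hP), Lp.coeFn_smul a u, hu, hx]
    with ω hsub hP' hDP hau hu' hx'
  rw [hsub, hau, Pi.sub_apply, hP', hDP, Pi.smul_apply, hu']
  by_cases hωP : ω ∈ P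
  · simp [hωP, hx' (hPD hωP)]
  · by_cases hωD : ω ∈ D <;> simp [hωP, hωD, hx']

end Restriction

lemma norm_lpRestrict_rpow_eq_mul (hpe : pe ≠ ∞) {β : Type*} (s : SimpleFunc Ω β) (g : β → ℝ)
    {f : Lp ℝ pe μ} (hf : ⇑f =ᵐ[μ] g ∘ s) {A : Set Ω} (hA : MeasurableSet A) {r : ℝ≥0∞}
    (hr : ∀ c, μ (A ∩ s ⁻¹' {c}) = r * μ (s ⁻¹' {c})) :
    ‖lpRestrict f hA‖ ^ pe.toReal = r.toReal * ‖f‖ ^ pe.toReal := by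
  have hpe0 : pe ≠ 0 := (zero_lt_one.trans_le Fact.out).ne'
  have hq : 0 < pe.toReal := ENNReal.toReal_pos hpe0 hpe
  have hnorm (ν : Measure Ω) (hfν : ⇑f =ᵐ[ν] g ∘ s) :
      eLpNorm f pe ν ^ pe.toReal = ∫⁻ ω, ‖g (s ω)‖ₑ ^ pe.toReal ∂ν := by
    rw [eLpNorm_eq_eLpNorm' hpe0 hpe, ← lintegral_rpow_enorm_eq_rpow_eLpNorm' hq]
    exact lintegral_congr_ae (hfν.fun_comp fun v => ‖v‖ₑ ^ pe.toReal)
  rw [lpRestrict, Lp.norm_toLp, eLpNorm_indicator_eq_eLpNorm_restrict hA, Lp.norm_def,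
    ENNReal.toReal_rpow, ENNReal.toReal_rpow, hnorm _ (ae_restrict_of_ae hf), hnorm μ hf,
    SimpleFunc.setLIntegral_comp_eq_mul s (fun c => ‖g c‖ₑ ^ pe.toReal) hr, ENNReal.toReal_mul]

namespace IsNarrow

variable [IsFiniteMeasure μ] {T : Lp ℝ pe μ →L[ℝ] Lp ℝ pe μ}

lemma exists_signed_indicator (hT : IsNarrow μ pe T) {D : Set Ω} (hD : MeasurableSet D)
    {η : ℝ} (hη : 0 < η) :
    ∃ P ⊆ D, MeasurableSet P ∧ ∃ u : Lp ℝ pe μ,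
      ⇑u =ᵐ[μ] P.indicator 1 - (D \ P).indicator 1 ∧ μ P = μ (D \ P) ∧ ‖T u‖ < η := by
  obtain ⟨u, hu2, hu0, hTu⟩ := hT D hD η hη
  set P := D ∩ u ⁻¹' {1}
  have hP : MeasurableSet P :=
    hD.inter ((Lp.stronglyMeasurable u).measurable (measurableSet_singleton 1))
  have hu : ⇑u =ᵐ[μ] P.indicator 1 - (D \ P).indicator 1 := by
    filter_upwards [hu2] with ω hω
    rw [Pi.sub_apply]
    by_cases hωD : ω ∈ D
    · rw [indicator_of_mem hωD] at hω
      by_cases h1 : u ω = 1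
      · simp [P, hωD, h1]
      · have hωP : ω ∉ P := fun hωP => h1 hωP.2
        rw [indicator_of_notMem hωP, indicator_of_mem (show ω ∈ D \ P from ⟨hωD, hωP⟩),
          (sq_eq_one_iff.mp hω).resolve_left h1, Pi.one_apply]
        norm_num
    · rw [indicator_of_notMem hωD, sq_eq_zero_iff] at hω
      simp [P, hω, hωD]
  refine ⟨P, inter_subset_left, hP, u, hu, ?_, hTu⟩
  have hreal : μ.real P - μ.real (D \ P) = 0 := by
    rw [← integral_indicator_one hP, ← integral_indicator_one (hD.diff hP), ← integral_sub
      ((integrable_const 1).indicator hP) ((integrable_const 1).indicator (hD.diff hP)), ← hu0]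
    exact integral_congr_ae hu.symm
  exact (measureReal_eq_measureReal_iff).1 (sub_eq_zero.1 hreal)

lemma exists_balanced_split (hT : IsNarrow μ pe T) {β : Type*} (s : SimpleFunc Ω β) (g : β → ℝ)
    {x : Lp ℝ pe μ} (hx : ⇑x =ᵐ[μ] g ∘ s) {A : Set Ω} (hA : MeasurableSet A) {δ : ℝ}
    (hδ : 0 < δ) :
    ∃ B ⊆ A, ∃ hB : MeasurableSet B, (∀ c, μ (B ∩ s ⁻¹' {c}) = μ ((A \ B) ∩ s ⁻¹' {c})) ∧
      ‖T (lpRestrict x hB) - T (lpRestrict x (hA.diff hB))‖ < δ := by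
  set M := ∑ c ∈ s.range, |g c|
  have hD (c : β) : MeasurableSet (A ∩ s ⁻¹' {c}) := hA.inter (s.measurableSet_fiber c)
  choose P hPD hP u hu hμP hTu using
    fun c => hT.exists_signed_indicator (hD c) (η := δ / (M + 1)) (by positivity)
  have hPs (c : β) : P c ⊆ s ⁻¹' {c} := (hPD c).trans inter_subset_right
  have hQs (c : β) : (A ∩ s ⁻¹' {c}) \ P c ⊆ s ⁻¹' {c} := sdiff_subset.trans inter_subset_right
  have hrange : range s ⊆ (s.range : Set β) := (SimpleFunc.coe_range s).symm.subset
  have hBc := biUnion_inter_preimage_singleton hrange hPs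
  have hAB := diff_biUnion_eq_biUnion_fiber_diff hrange hPs A
  have hABc := biUnion_inter_preimage_singleton hrange hQs
  simp only [Finset.mem_coe] at hBc hAB hABc
  have hB : MeasurableSet (⋃ c ∈ s.range, P c) := s.range.measurableSet_biUnion fun c _ => hP c
  refine ⟨⋃ c ∈ s.range, P c, iUnion₂_subset fun c _ => (hPD c).trans inter_subset_left, hB,
    fun c => ?_, ?_⟩
  · rw [hBc, hAB, hABc, hμP]
  have hdiff : lpRestrict x hB - lpRestrict x (hA.diff hB) = ∑ c ∈ s.range, g c • u c := by
    rw [lpRestrict_biUnion_finset x s.range hP ((pairwiseDisjoint_fiber s _).mono hPs),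
      lpRestrict_congr x _ (s.range.measurableSet_biUnion fun c _ => (hD c).diff (hP c)) hAB,
      lpRestrict_biUnion_finset x s.range (fun c => (hD c).diff (hP c))
        ((pairwiseDisjoint_fiber s _).mono hQs), ← Finset.sum_sub_distrib]
    refine Finset.sum_congr rfl fun c _ => lpRestrict_sub_lpRestrict_diff_eq_smul x (u c) (hD c)
      (hP c) (hPD c) (hx.mono fun ω hω hωD => ?_) (hu c)
    rw [hω, Function.comp_apply, hωD.2]
  rw [← map_sub, hdiff, map_sum]
  calc ‖∑ c ∈ s.range, T (g c • u c)‖ ≤ ∑ c ∈ s.range, |g c| * (δ / (M + 1)) := by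
        refine norm_sum_le_of_le _ fun c _ => ?_
        rw [map_smul, norm_smul, Real.norm_eq_abs]
        exact mul_le_mul_of_nonneg_left (hTu c).le (abs_nonneg _)
    _ = M / (M + 1) * δ := by rw [← Finset.sum_mul]; ring
    _ < δ := mul_lt_of_lt_one_left hδ ((div_lt_one (by positivity)).2 (lt_add_one M))

end IsNarrow

def IsDyadicPiece {β : Type*} (T : Lp ℝ pe μ →L[ℝ] Lp ℝ pe μ) (x : Lp ℝ pe μ)
    (s : SimpleFunc Ω β) (n : ℕ) (ε : ℝ) {A : Set Ω} (hA : MeasurableSet A) : Prop :=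
  (∀ c, μ (A ∩ s ⁻¹' {c}) = 2⁻¹ ^ n * μ (s ⁻¹' {c})) ∧
    ‖T (lpRestrict x hA) - ((2 : ℝ) ^ n)⁻¹ • T x‖ < ε

section Dyadic

variable {β : Type*} {T : Lp ℝ pe μ →L[ℝ] Lp ℝ pe μ} {x : Lp ℝ pe μ} {s : SimpleFunc Ω β}
  {ε : ℝ}

lemma isDyadicPiece_univ (hε : 0 < ε) : IsDyadicPiece T x s 0 ε MeasurableSet.univ :=
  ⟨fun c => by rw [univ_inter, pow_zero, one_mul], by simpa [lpRestrict_univ] using hε⟩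

lemma IsNarrow.exists_split_isDyadicPiece [IsFiniteMeasure μ] (hT : IsNarrow μ pe T)
    (g : β → ℝ) (hx : ⇑x =ᵐ[μ] g ∘ s) {n : ℕ} {A : Set Ω} {hA : MeasurableSet A}
    (hpiece : IsDyadicPiece T x s n ε hA) :
    ∃ B ⊆ A, ∃ hB : MeasurableSet B,
      IsDyadicPiece T x s (n + 1) ε hB ∧ IsDyadicPiece T x s (n + 1) ε (hA.diff hB) := by
  have hε : 0 < ε := (norm_nonneg _).trans_lt hpiece.2
  obtain ⟨B, hBA, hB, hfib, hsplit⟩ := hT.exists_balanced_split s g hx hA hε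
  have hTA : T (lpRestrict x hA) = T (lpRestrict x hB) + T (lpRestrict x (hA.diff hB)) := by
    rw [← map_add, ← lpRestrict_union x hB (hA.diff hB) disjoint_sdiff_right,
      lpRestrict_congr x hA _ (union_sdiff_cancel hBA).symm]
  have hpow : ((2 : ℝ) ^ (n + 1))⁻¹ • T x = (2 : ℝ)⁻¹ • ((2 : ℝ) ^ n)⁻¹ • T x := by
    rw [smul_smul, pow_succ', mul_inv]
  refine ⟨B, hBA, hB, ⟨fun c => ?_, ?_⟩, fun c => ?_, ?_⟩
  · rw [measure_inter_eq_inv_two_mul (hA.diff hB) (s.measurableSet_fiber c)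
      disjoint_sdiff_right (hfib c), union_sdiff_cancel hBA, hpiece.1, pow_succ', mul_assoc]
  · rw [hpow]
    exact norm_sub_inv_two_smul_lt (by rw [← hTA]; exact hpiece.2) hsplit
  · rw [measure_inter_eq_inv_two_mul hB (s.measurableSet_fiber c) disjoint_sdiff_left
      (hfib c).symm, sdiff_union_of_subset hBA, hpiece.1, pow_succ', mul_assoc]
  · rw [hpow]
    exact norm_sub_inv_two_smul_lt (by rw [add_comm, ← hTA]; exact hpiece.2)
      (by rw [norm_sub_rev]; exact hsplit)

end Dyadic

lemma IsNarrow.exists_partition_isDyadicPiece [IsFiniteMeasure μ] {β : Type*}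
    {T : Lp ℝ pe μ →L[ℝ] Lp ℝ pe μ} (hT : IsNarrow μ pe T) {x : Lp ℝ pe μ} (s : SimpleFunc Ω β)
    (g : β → ℝ) (hx : ⇑x =ᵐ[μ] g ∘ s) (n : ℕ) {ε : ℝ} (hε : 0 < ε) :
    ∃ A : Fin (2 ^ n) → Set Ω, ∃ hA : ∀ k, MeasurableSet (A k),
      Pairwise (Function.onFun Disjoint A) ∧ (⋃ k, A k) = univ ∧
      ∀ k, IsDyadicPiece T x s n ε (hA k) := by
  induction n with
  | zero =>
    exact ⟨fun _ => univ, fun _ => .univ,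
      fun i j hij => (hij (Subsingleton.elim (α := Fin 1) i j)).elim, iUnion_const univ,
      fun _ => isDyadicPiece_univ hε⟩
  | succ n ih =>
    obtain ⟨A, hA, hdisj, hcover, hpiece⟩ := ih
    choose B hBA hB hBpiece hABpiece using fun k => hT.exists_split_isDyadicPiece g hx (hpiece k)
    have hmeas (ij : Fin (2 ^ n) × Fin 2) : MeasurableSet (splitPieces A B ij) := by
      obtain ⟨i, j⟩ := ij
      fin_cases j
      exacts [hB i, (hA i).diff (hB i)]
    have hsplit (ij : Fin (2 ^ n) × Fin 2) : IsDyadicPiece T x s (n + 1) ε (hmeas ij) := by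
      obtain ⟨i, j⟩ := ij
      fin_cases j
      exacts [hBpiece i, hABpiece i]
    let e : Fin (2 ^ (n + 1)) ≃ Fin (2 ^ n) × Fin 2 :=
      (finCongr (pow_succ 2 n)).trans finProdFinEquiv.symm
    refine ⟨fun k => splitPieces A B (e k), fun k => hmeas (e k),
      (pairwise_disjoint_splitPieces hdisj hBA).comp_of_injective e.injective, ?_,
      fun k => hsplit (e k)⟩
    rw [e.surjective.iUnion_comp (splitPieces A B), iUnion_splitPieces hBA, hcover]

theorem stmt16_general [IsFiniteMeasure μ]
    (p : ℝ) (hp : 1 ≤ p) (hpe : pe = ENNReal.ofReal p)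
    (T : Lp ℝ pe μ →L[ℝ] Lp ℝ pe μ) (hT : IsNarrow μ pe T)
    (x y : Lp ℝ pe μ) (sx sy : SimpleFunc Ω ℝ)
    (hxs : (x : Ω → ℝ) =ᵐ[μ] sx) (hys : (y : Ω → ℝ) =ᵐ[μ] sy)
    (hy : T x = y) (n : ℕ) (ε : ℝ) (hε : 0 < ε) :
    ∃ A : Fin (2 ^ n) → Set Ω, ∃ hA : ∀ k, MeasurableSet (A k),
      Pairwise (Function.onFun Disjoint A) ∧ (⋃ k, A k) = Set.univ ∧
      ∀ k, ‖lpRestrict x (hA k)‖ ^ p = ((2 : ℝ) ^ n)⁻¹ * ‖x‖ ^ p ∧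
        ‖lpRestrict y (hA k)‖ ^ p = ((2 : ℝ) ^ n)⁻¹ * ‖y‖ ^ p ∧
        ‖T (lpRestrict x (hA k)) - ((2 : ℝ) ^ n)⁻¹ • y‖ < ε := by
  obtain ⟨A, hA, hdisj, hcover, hpiece⟩ :=
    hT.exists_partition_isDyadicPiece (sx.pair sy) Prod.fst hxs n hε
  have hp_eq : p = pe.toReal := by rw [hpe, ENNReal.toReal_ofReal (by linarith)]
  have hpe_top : pe ≠ ∞ := hpe ▸ ENNReal.ofReal_ne_top
  have hr : ((2⁻¹ : ℝ≥0∞) ^ n).toReal = ((2 : ℝ) ^ n)⁻¹ := by simp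
  refine ⟨A, hA, hdisj, hcover, fun k => ⟨?_, ?_, ?_⟩⟩
  · rw [hp_eq, norm_lpRestrict_rpow_eq_mul hpe_top _ Prod.fst hxs (hA k) (hpiece k).1, hr]
  · rw [hp_eq, norm_lpRestrict_rpow_eq_mul hpe_top _ Prod.snd hys (hA k) (hpiece k).1, hr]
  · rw [← hy]
    exact (hpiece k).2

/-- For a narrow `T` on `L_p(μ)` over an atomless finite measure and simple functions
`x, y` with `Tx = y`, for each `n` and `ε > 0` there is a partition
`Ω = A₁ ⊔ … ⊔ A_{2^n}` with `‖x1_{A_k}‖^p = 2^{-n}‖x‖^p`,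
`‖y1_{A_k}‖^p = 2^{-n}‖y‖^p` and `‖T(x1_{A_k}) - 2^{-n} y‖ < ε` for all `k`. -/
theorem stmt16 [IsFiniteMeasure μ]
    (hμ : ∀ A : Set Ω, MeasurableSet A → 0 < μ A →
      ∃ B ⊆ A, MeasurableSet B ∧ 0 < μ B ∧ μ B < μ A)
    (p : ℝ) (hp : 1 ≤ p) (hpe : pe = ENNReal.ofReal p)
    (T : Lp ℝ pe μ →L[ℝ] Lp ℝ pe μ) (hT : IsNarrow μ pe T)
    (x y : Lp ℝ pe μ) (sx sy : SimpleFunc Ω ℝ)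
    (hxs : (x : Ω → ℝ) =ᵐ[μ] sx) (hys : (y : Ω → ℝ) =ᵐ[μ] sy)
    (hy : T x = y) (n : ℕ) (ε : ℝ) (hε : 0 < ε) :
    ∃ A : Fin (2 ^ n) → Set Ω, ∃ hA : ∀ k, MeasurableSet (A k),
      Pairwise (Function.onFun Disjoint A) ∧ (⋃ k, A k) = Set.univ ∧
      ∀ k, ‖lpRestrict x (hA k)‖ ^ p = ((2 : ℝ) ^ n)⁻¹ * ‖x‖ ^ p ∧
        ‖lpRestrict y (hA k)‖ ^ p = ((2 : ℝ) ^ n)⁻¹ * ‖y‖ ^ p ∧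
        ‖T (lpRestrict x (hA k)) - ((2 : ℝ) ^ n)⁻¹ • y‖ < ε :=
  stmt16_general p hp hpe T hT x y sx sy hxs hys hy n ε hε
end
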